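/- Let ψ be a unit vector in ℂ^d, let k ≥ 1 and a > 0, let p : Fin m → ℝ be a probability vector, let σ_z (z ∈ Fin m) be density matrices on ℂ^d with ∑_z p_z (1 − ⟨ψ|σ_z|ψ⟩) ≤ δ, and let τ be a density matrix on ℂ^m with (1/2)‖τ − D_p‖₁ ≤ ε, where D_p is the diagonal m×m matrix with diagonal entries p_z. Set q_z := τ_{zz} (the real, nonnegative diagonal entries of τ, which sum to 1). Then (1/2)‖∑_z q_z σ_z^{⊗k} − (|ψ⟩⟨ψ|)^{⊗k}‖₁ ≤ ε + kδ/a + k√a. -/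

import Mathlib

open Matrix ComplexOrder

noncomputable def traceNorm {n : Type*} [Fintype n] [DecidableEq n]
    (A : Matrix n n ℂ) : ℝ :=
  (((Matrix.posSemidef_conjTranspose_mul_self A).1.eigenvectorUnitary : Matrix n n ℂ) *
    Matrix.diagonal ((fun x : ℝ => (x : ℂ)) ∘ (√·) ∘ (Matrix.posSemidef_conjTranspose_mul_self A).1.eigenvalues) *
    (star (Matrix.posSemidef_conjTranspose_mul_self A).1.eigenvectorUnitary : Matrix n n ℂ)).trace.re

noncomputable def ketbra {d : ℕ} (ψ : Fin d → ℂ) : Matrix (Fin d) (Fin d) ℂ :=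
  fun i j => ψ i * (starRingEnd ℂ) (ψ j)

noncomputable def kronPow {d : ℕ} (M : Matrix (Fin d) (Fin d) ℂ) (k : ℕ) :
    Matrix (Fin k → Fin d) (Fin k → Fin d) ℂ :=
  fun i j => ∏ t : Fin k, M (i t) (j t)

noncomputable def fid {d : ℕ} (ψ : Fin d → ℂ) (σ : Matrix (Fin d) (Fin d) ℂ) : ℝ :=
  (∑ i, ∑ j, (starRingEnd ℂ) (ψ i) * σ i j * ψ j).re

/-!
Against a pure state `Φ = |φ⟩⟨φ|`, a density matrix `ρ` of fidelity `F = ⟨φ|ρ|φ⟩` splits as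
`ρ - Φ = P - Q` with `P, Q ≥ 0` of traces at most `(1 - F) + √(1 - F)`: with `E = 1 - Φ`,
`ρ - Φ = EρE - (1 - F)Φ + (EρΦ + ΦρE)`, and the cross term is `1/(2r)` times the difference of
the positive matrices `(E ± rΦ)ρ(E ± rΦ)`, where `r = √(1 - F)`. Such splittings pass through
convex combinations and bound the trace norm. For `σ_z^{⊗k}` against `(|ψ⟩⟨ψ|)^{⊗k}` the
fidelity is `F_z^k ≥ 1 - k(1 - F_z)` (Bernoulli). Replacing the weights `q_z` by `p_z` costs at
most `ε`, since the diagonals of `τ` and `D_p` are no further apart in total variation than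
`τ` and `D_p` in trace distance. Finally `min(1, x + √x) ≤ x/a + √a` (a Markov-type split at
`x = a`) turns `∑ p_z k(1 - F_z) ≤ kδ` into the bound.
-/

open scoped MatrixOrder

variable {n : Type*} [Fintype n]

section TraceNorm

variable [DecidableEq n]

lemma Matrix.IsHermitian.trace_cfc {A : Matrix n n ℂ} (hA : A.IsHermitian) (f : ℝ → ℝ) :
    (cfc f A).trace = ∑ i, (f (hA.eigenvalues i) : ℂ) := by
  rw [hA.cfc_eq, IsHermitian.cfc, Unitary.conjStarAlgAut_apply, trace_mul_cycle,
    Unitary.coe_star_mul_self, one_mul, trace_diagonal]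
  rfl

lemma traceNorm_eq_re_trace_cfc_sqrt (A : Matrix n n ℂ) :
    traceNorm A = (cfc Real.sqrt (Aᴴ * A)).trace.re := by
  rw [(posSemidef_conjTranspose_mul_self A).1.cfc_eq, IsHermitian.cfc,
    Unitary.conjStarAlgAut_apply]
  rfl

lemma traceNorm_eq_sum_abs_eigenvalues {A : Matrix n n ℂ} (hA : A.IsHermitian) :
    traceNorm A = ∑ i, |hA.eigenvalues i| := by
  have hsq : Aᴴ * A = cfc (fun x : ℝ => x * x) A := by
    rw [cfc_mul _ _ A, cfc_id' ℝ A, hA.eq]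
  rw [traceNorm_eq_re_trace_cfc_sqrt, hsq, ← cfc_comp' Real.sqrt (fun x : ℝ => x * x) A,
    hA.trace_cfc]
  simp [Real.sqrt_mul_self_eq_abs]

lemma traceNorm_sub_le {P Q : Matrix n n ℂ} (hP : P.PosSemidef) (hQ : Q.PosSemidef) :
    traceNorm (P - Q) ≤ P.trace.re + Q.trace.re := by
  have hM := hP.1.sub hQ.1
  set U : Matrix n n ℂ := (hM.eigenvectorUnitary : Matrix n n ℂ)
  have htrace : ∀ B : Matrix n n ℂ, (star U * B * U).trace = B.trace := fun B => by
    rw [trace_mul_cycle, mem_unitaryGroup_iff.mp hM.eigenvectorUnitary.2, one_mul]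
  have hP' : (star U * P * U).PosSemidef := by
    simpa only [star_eq_conjTranspose] using hP.conjTranspose_mul_mul_same U
  have hQ' : (star U * Q * U).PosSemidef := by
    simpa only [star_eq_conjTranspose] using hQ.conjTranspose_mul_mul_same U
  -- in the eigenbasis of `P - Q`, each eigenvalue is a difference of nonnegative diagonal entries
  have heig : ∀ i, hM.eigenvalues i = ((star U * P * U) i i).re - ((star U * Q * U) i i).re :=
    fun i => by
      have h := congrFun₂ hM.conjStarAlgAut_star_eigenvectorUnitary i i
      rw [Unitary.conjStarAlgAut_star_apply, mul_sub, sub_mul, diagonal_apply_eq] at h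
      simpa using congrArg Complex.re h.symm
  calc traceNorm (P - Q) = ∑ i, |hM.eigenvalues i| := traceNorm_eq_sum_abs_eigenvalues hM
    _ ≤ ∑ i, ((star U * P * U) i i).re + ∑ i, ((star U * Q * U) i i).re := by
      rw [← Finset.sum_add_distrib]
      refine Finset.sum_le_sum fun i _ => ?_
      have hPi := (Complex.nonneg_iff.mp (hP'.diag_nonneg (i := i))).1
      have hQi := (Complex.nonneg_iff.mp (hQ'.diag_nonneg (i := i))).1
      rw [heig i, abs_sub_le_iff]
      constructor <;> linarith
    _ = P.trace.re + Q.trace.re := by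
      rw [← htrace P, ← htrace Q, trace, trace, Complex.re_sum, Complex.re_sum]; rfl

lemma sum_mul_re_diag_le {M : Matrix n n ℂ} (hM : M.IsHermitian) {w : n → ℝ}
    (hw0 : ∀ i, 0 ≤ w i) (hw1 : ∀ i, w i ≤ 1) :
    ∑ i, w i * (M i i).re ≤ (traceNorm M + M.trace.re) / 2 := by
  set P := cfc (fun x : ℝ => max x 0) M
  set Q := cfc (fun x : ℝ => max (-x) 0) M
  have hP : P.PosSemidef := (cfc_nonneg fun x _ => le_max_right x 0).posSemidef
  have hQ : Q.PosSemidef := (cfc_nonneg fun x _ => le_max_right (-x) 0).posSemidef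
  have hPQ : M = P - Q := by
    rw [← cfc_sub _ _ M]
    conv_lhs => rw [← cfc_id' ℝ M]
    refine cfc_congr fun x _ => ?_
    rcases le_total x 0 with h | h <;> simp [h]
  have htrP : P.trace.re = (traceNorm M + M.trace.re) / 2 := by
    rw [hM.trace_cfc, traceNorm_eq_sum_abs_eigenvalues hM, hM.trace_eq_sum_eigenvalues,
      Complex.re_sum, Complex.re_sum, ← Finset.sum_add_distrib, Finset.sum_div]
    refine Finset.sum_congr rfl fun i _ => ?_
    simp only [Complex.ofReal_re, Complex.coe_algebraMap]
    rcases le_total (hM.eigenvalues i) 0 with h | h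
    · rw [max_eq_right h, abs_of_nonpos h]; ring
    · rw [max_eq_left h, abs_of_nonneg h]; ring
  calc ∑ i, w i * (M i i).re ≤ ∑ i, (P i i).re := by
        refine Finset.sum_le_sum fun i _ => ?_
        have hPi := (Complex.nonneg_iff.mp (hP.diag_nonneg (i := i))).1
        have hQi := (Complex.nonneg_iff.mp (hQ.diag_nonneg (i := i))).1
        rw [hPQ, Matrix.sub_apply, Complex.sub_re]
        nlinarith [hw0 i, hw1 i]
    _ = (traceNorm M + M.trace.re) / 2 := by rw [← htrP, trace, Complex.re_sum]; rfl

lemma sum_re_diag_mul_le_add_traceNorm {τ : Matrix n n ℂ} (hτ : τ.IsHermitian)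
    (hτtr : τ.trace = 1) {p w : n → ℝ} (hp1 : ∑ i, p i = 1) (hw0 : ∀ i, 0 ≤ w i)
    (hw1 : ∀ i, w i ≤ 1) :
    ∑ i, (τ i i).re * w i ≤ ∑ i, p i * w i + traceNorm (τ - diagonal fun i => (p i : ℂ)) / 2 := by
  set M := τ - diagonal fun i => (p i : ℂ)
  have hM : M.IsHermitian := hτ.sub (isHermitian_diagonal_of_self_adjoint _ (by ext; simp))
  have htr : M.trace.re = 0 := by simp [M, hτtr, ← Complex.ofReal_sum, hp1]
  have h := sum_mul_re_diag_le hM hw0 hw1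
  rw [htr, add_zero] at h
  have hdiag : ∀ i, w i * (M i i).re = (τ i i).re * w i - p i * w i := fun i => by
    simp [M]; ring
  simp only [hdiag, Finset.sum_sub_distrib] at h
  linarith

end TraceNorm

-- A certificate for `traceNorm A ≤ 2 * c` which, unlike the trace norm, passes directly
-- through positive combinations (`PosSemidefSplit.sum_smul`).
def PosSemidefSplit (A : Matrix n n ℂ) (c : ℝ) : Prop :=
  ∃ P Q : Matrix n n ℂ, P.PosSemidef ∧ Q.PosSemidef ∧ A = P - Q ∧
    P.trace.re ≤ c ∧ Q.trace.re ≤ c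

namespace PosSemidefSplit

variable {A : Matrix n n ℂ} {c : ℝ}

lemma traceNorm_le [DecidableEq n] (h : PosSemidefSplit A c) : traceNorm A ≤ 2 * c := by
  obtain ⟨P, Q, hP, hQ, rfl, hPc, hQc⟩ := h
  linarith [traceNorm_sub_le hP hQ]

lemma mono (h : PosSemidefSplit A c) {c' : ℝ} (hc : c ≤ c') : PosSemidefSplit A c' := by
  obtain ⟨P, Q, hP, hQ, hA, hPc, hQc⟩ := h
  exact ⟨P, Q, hP, hQ, hA, hPc.trans hc, hQc.trans hc⟩

lemma min (h : PosSemidefSplit A c) {c' : ℝ} (h' : PosSemidefSplit A c') :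
    PosSemidefSplit A (min c c') := by
  rcases min_choice c c' with hc | hc <;> rw [hc]
  exacts [h, h']

lemma sum_smul {ι : Type*} [Fintype ι] {A : ι → Matrix n n ℂ} {c w : ι → ℝ}
    (h : ∀ z, PosSemidefSplit (A z) (c z)) (hw : ∀ z, 0 ≤ w z) :
    PosSemidefSplit (∑ z, (w z : ℂ) • A z) (∑ z, w z * c z) := by
  choose P Q hP hQ hA hPc hQc using h
  have htrace : ∀ R : ι → Matrix n n ℂ,
      (∑ z, (w z : ℂ) • R z).trace.re = ∑ z, w z * (R z).trace.re := fun R => by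
    simp [trace_sum, Complex.re_sum]
  have hpsd : ∀ R : ι → Matrix n n ℂ, (∀ z, (R z).PosSemidef) →
      (∑ z, (w z : ℂ) • R z).PosSemidef := fun R hR =>
    posSemidef_sum _ fun z _ => (hR z).smul (Complex.zero_le_real.mpr (hw z))
  refine ⟨∑ z, (w z : ℂ) • P z, ∑ z, (w z : ℂ) • Q z, hpsd P hP, hpsd Q hQ, ?_, ?_, ?_⟩
  · simp only [hA, smul_sub, Finset.sum_sub_distrib]
  · rw [htrace]; exact Finset.sum_le_sum fun z _ => mul_le_mul_of_nonneg_left (hPc z) (hw z)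
  · rw [htrace]; exact Finset.sum_le_sum fun z _ => mul_le_mul_of_nonneg_left (hQc z) (hw z)

end PosSemidefSplit

lemma posSemidefSplit_sub_of_trace_eq_one {ρ σ : Matrix n n ℂ} (hρ : ρ.PosSemidef)
    (hρtr : ρ.trace = 1) (hσ : σ.PosSemidef) (hσtr : σ.trace = 1) :
    PosSemidefSplit (ρ - σ) 1 :=
  ⟨ρ, σ, hρ, hσ, rfl, by simp [hρtr], by simp [hσtr]⟩

lemma posSemidefSplit_mul_add_mul {ρ E Φ : Matrix n n ℂ} (hρ : ρ.PosSemidef)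
    (hE : E.IsHermitian) (hΦ : Φ.IsHermitian) (hEE : E * E = E) (hΦΦ : Φ * Φ = Φ)
    (hEΦ : E * Φ = 0) {r : ℝ} (hr : 0 < r) :
    PosSemidefSplit (E * ρ * Φ + Φ * ρ * E)
      (((E * ρ).trace.re + r ^ 2 * (Φ * ρ).trace.re) / (2 * r)) := by
  have hΦE : Φ * E = 0 := by simpa [hE.eq, hΦ.eq] using congrArg conjTranspose hEΦ
  -- `(E + rΦ) ρ (E + rΦ) - (E - rΦ) ρ (E - rΦ) = 2r (EρΦ + ΦρE)`
  set S : ℝ → Matrix n n ℂ := fun s => E + (s : ℂ) • Φ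
  have hS : ∀ s, (S s)ᴴ = S s := fun s => by
    simp [S, conjTranspose_add, conjTranspose_smul, hE.eq, hΦ.eq]
  have hSS : ∀ s, S s * S s = E + ((s ^ 2 : ℝ) : ℂ) • Φ := fun s => by
    simp only [S, add_mul, mul_add, smul_mul_assoc, mul_smul_comm, smul_smul, hEE, hΦΦ, hEΦ,
      hΦE, smul_zero, add_zero, zero_add]
    push_cast; ring_nf
  have hpsd : ∀ s, ((((2 * r)⁻¹ : ℝ) : ℂ) • (S s * ρ * S s)).PosSemidef := fun s => by
    have h := hρ.conjTranspose_mul_mul_same (S s)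
    rw [hS] at h
    exact h.smul (Complex.zero_le_real.mpr (by positivity))
  have htr : ∀ s, ((((2 * r)⁻¹ : ℝ) : ℂ) • (S s * ρ * S s)).trace.re
      = ((E * ρ).trace.re + s ^ 2 * (Φ * ρ).trace.re) / (2 * r) := fun s => by
    rw [trace_smul, trace_mul_cycle, hSS, add_mul, trace_add, smul_mul_assoc, trace_smul]
    simp only [smul_eq_mul, Complex.re_ofReal_mul, Complex.add_re]
    ring
  refine ⟨_, _, hpsd r, hpsd (-r), ?_, (htr r).le, (htr (-r)).le.trans_eq (by rw [neg_sq])⟩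
  simp only [S, add_mul, mul_add, smul_mul_assoc, mul_smul_comm, smul_add, smul_smul]
  have hr' : (r : ℂ) ≠ 0 := by exact_mod_cast hr.ne'
  push_cast
  field_simp
  module

lemma trace_vecMulVec_mul (u v : n → ℂ) (A : Matrix n n ℂ) :
    (vecMulVec u v * A).trace = v ⬝ᵥ A *ᵥ u := by
  rw [vecMulVec_mul, trace_vecMulVec, dotProduct_comm, dotProduct_mulVec]

lemma vecMulVec_mul_mul_vecMulVec (φ : n → ℂ) (A : Matrix n n ℂ) :
    vecMulVec φ (star φ) * A * vecMulVec φ (star φ) =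
      (star φ ⬝ᵥ A *ᵥ φ) • vecMulVec φ (star φ) := by
  rw [vecMulVec_mul, vecMulVec_mul_vecMulVec, ← dotProduct_mulVec, vecMulVec_smul]

lemma Matrix.PosSemidef.star_dotProduct_mulVec_eq_re {ρ : Matrix n n ℂ} (hρ : ρ.PosSemidef)
    (φ : n → ℂ) :
    star φ ⬝ᵥ ρ *ᵥ φ = (star φ ⬝ᵥ ρ *ᵥ φ).re :=
  Complex.eq_re_of_ofReal_le (r := 0) (by simpa using hρ.dotProduct_mulVec_nonneg φ)

lemma Matrix.PosSemidef.sum_ofReal_re_diag {τ : Matrix n n ℂ} (hτ : τ.PosSemidef) :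
    ∑ i, (((τ i i).re : ℝ) : ℂ) = τ.trace :=
  Finset.sum_congr rfl fun i _ =>
    (Complex.eq_re_of_ofReal_le (r := 0) (by simpa using hτ.diag_nonneg (i := i))).symm

lemma Matrix.PosSemidef.mul_eq_zero_of_trace_conjTranspose_mul_mul_eq_zero [DecidableEq n]
    {ρ E : Matrix n n ℂ} (hρ : ρ.PosSemidef) (h : (Eᴴ * ρ * E).trace = 0) : ρ * E = 0 := by
  obtain ⟨B, rfl⟩ := CStarAlgebra.nonneg_iff_eq_star_mul_self.mp hρ.nonneg
  have hBE : (B * E)ᴴ * (B * E) = 0 := by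
    have hconj : (B * E)ᴴ * (B * E) = Eᴴ * (star B * B) * E := by
      rw [conjTranspose_mul, star_eq_conjTranspose]; simp only [mul_assoc]
    rw [hconj, ← (hρ.conjTranspose_mul_mul_same E).trace_eq_zero_iff, h]
  rw [mul_assoc, conjTranspose_mul_self_eq_zero.mp hBE, mul_zero]

lemma vecMulVec_mul_self {φ : n → ℂ} (hφ : star φ ⬝ᵥ φ = 1) :
    vecMulVec φ (star φ) * vecMulVec φ (star φ) = vecMulVec φ (star φ) := by
  rw [vecMulVec_mul_vecMulVec, hφ, one_smul]

section PureState

variable [DecidableEq n] {φ : n → ℂ}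

lemma isHermitian_one_sub_vecMulVec (φ : n → ℂ) : (1 - vecMulVec φ (star φ)).IsHermitian :=
  isHermitian_one.sub (posSemidef_vecMulVec_self_star φ).1

lemma one_sub_vecMulVec_mul_self (hφ : star φ ⬝ᵥ φ = 1) :
    (1 - vecMulVec φ (star φ)) * (1 - vecMulVec φ (star φ)) = 1 - vecMulVec φ (star φ) := by
  simp [sub_mul, mul_sub, vecMulVec_mul_self hφ]

lemma trace_one_sub_vecMulVec_conj {ρ : Matrix n n ℂ} (hρtr : ρ.trace = 1)
    (hφ : star φ ⬝ᵥ φ = 1) :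
    ((1 - vecMulVec φ (star φ)) * ρ * (1 - vecMulVec φ (star φ))).trace =
      1 - star φ ⬝ᵥ ρ *ᵥ φ := by
  rw [trace_mul_cycle, one_sub_vecMulVec_mul_self hφ, sub_mul, one_mul, trace_sub, hρtr,
    trace_vecMulVec_mul]

lemma re_star_dotProduct_mulVec_le_one {ρ : Matrix n n ℂ} (hρ : ρ.PosSemidef)
    (hρtr : ρ.trace = 1) (hφ : star φ ⬝ᵥ φ = 1) : (star φ ⬝ᵥ ρ *ᵥ φ).re ≤ 1 := by
  have h := hρ.conjTranspose_mul_mul_same (1 - vecMulVec φ (star φ))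
  rw [(isHermitian_one_sub_vecMulVec φ).eq] at h
  have h0 := (Complex.nonneg_iff.mp h.trace_nonneg).1
  rw [trace_one_sub_vecMulVec_conj hρtr hφ] at h0
  simpa using h0

lemma sub_vecMulVec_eq (ρ : Matrix n n ℂ) :
    ρ - vecMulVec φ (star φ) =
      (1 - vecMulVec φ (star φ)) * ρ * (1 - vecMulVec φ (star φ)) +
        ((1 - vecMulVec φ (star φ)) * ρ * vecMulVec φ (star φ) +
          vecMulVec φ (star φ) * ρ * (1 - vecMulVec φ (star φ))) -
        (1 - star φ ⬝ᵥ ρ *ᵥ φ) • vecMulVec φ (star φ) := by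
  have hΦρΦ := vecMulVec_mul_mul_vecMulVec φ ρ
  simp only [sub_mul, mul_sub, one_mul, mul_one, hΦρΦ, sub_smul, one_smul]
  abel

lemma posSemidefSplit_cross_vecMulVec {ρ : Matrix n n ℂ} (hρ : ρ.PosSemidef)
    (hρtr : ρ.trace = 1) (hφ : star φ ⬝ᵥ φ = 1) :
    PosSemidefSplit
      ((1 - vecMulVec φ (star φ)) * ρ * vecMulVec φ (star φ) +
        vecMulVec φ (star φ) * ρ * (1 - vecMulVec φ (star φ)))
      √(1 - (star φ ⬝ᵥ ρ *ᵥ φ).re) := by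
  set Φ := vecMulVec φ (star φ)
  set F := (star φ ⬝ᵥ ρ *ᵥ φ).re
  set E : Matrix n n ℂ := 1 - Φ
  have hE : E.IsHermitian := isHermitian_one_sub_vecMulVec φ
  have hF : star φ ⬝ᵥ ρ *ᵥ φ = F := hρ.star_dotProduct_mulVec_eq_re φ
  rcases (re_star_dotProduct_mulVec_le_one hρ hρtr hφ).lt_or_eq with hlt | heq
  · have hΦΦ : Φ * Φ = Φ := vecMulVec_mul_self hφ
    have hr : 0 < √(1 - F) := Real.sqrt_pos.mpr (by linarith)
    refine (posSemidefSplit_mul_add_mul hρ hE (posSemidef_vecMulVec_self_star φ).1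
      (one_sub_vecMulVec_mul_self hφ) hΦΦ (by rw [sub_mul, one_mul, hΦΦ, sub_self]) hr).mono ?_
    rw [sub_mul, one_mul, trace_sub, hρtr, trace_vecMulVec_mul, hF, Real.sq_sqrt (by linarith),
      div_le_iff₀ (by positivity)]
    simp only [Complex.sub_re, Complex.one_re, Complex.ofReal_re]
    nlinarith [Real.sq_sqrt (show 0 ≤ 1 - F by linarith)]
  · -- `tr (E ρ E) = 1 - F = 0` forces `ρ E = 0`, so both cross terms vanish
    have hρE : ρ * E = 0 := hρ.mul_eq_zero_of_trace_conjTranspose_mul_mul_eq_zero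
      (by rw [hE.eq, trace_one_sub_vecMulVec_conj hρtr hφ, hF, show F = 1 from heq]; simp)
    have hEρ : E * ρ = 0 := by
      simpa [hρ.1.eq, hE.eq] using congrArg conjTranspose hρE
    exact ⟨0, 0, .zero, .zero, by simp [mul_assoc, hρE, hEρ], by simp, by simp⟩

lemma posSemidefSplit_sub_vecMulVec {ρ : Matrix n n ℂ} (hρ : ρ.PosSemidef) (hρtr : ρ.trace = 1)
    (hφ : star φ ⬝ᵥ φ = 1) :
    PosSemidefSplit (ρ - vecMulVec φ (star φ))
      (1 - (star φ ⬝ᵥ ρ *ᵥ φ).re + √(1 - (star φ ⬝ᵥ ρ *ᵥ φ).re)) := by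
  set Φ := vecMulVec φ (star φ)
  set F := (star φ ⬝ᵥ ρ *ᵥ φ).re
  set E : Matrix n n ℂ := 1 - Φ
  have hF : star φ ⬝ᵥ ρ *ᵥ φ = F := hρ.star_dotProduct_mulVec_eq_re φ
  have hF1 : F ≤ 1 := re_star_dotProduct_mulVec_le_one hρ hρtr hφ
  have hE : E.IsHermitian := isHermitian_one_sub_vecMulVec φ
  have hEρE : (E * ρ * E).PosSemidef := by
    simpa only [hE.eq] using hρ.conjTranspose_mul_mul_same E
  obtain ⟨P, Q, hP, hQ, hPQ, hPtr, hQtr⟩ := posSemidefSplit_cross_vecMulVec hρ hρtr hφ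
  refine ⟨E * ρ * E + P, ((1 - F : ℝ) : ℂ) • Φ + Q, hEρE.add hP,
    ((posSemidef_vecMulVec_self_star φ).smul (Complex.zero_le_real.mpr (by linarith))).add hQ,
    ?_, ?_, ?_⟩
  · rw [sub_vecMulVec_eq ρ, hPQ, hF]
    push_cast
    abel
  · rw [trace_add, Complex.add_re, trace_one_sub_vecMulVec_conj hρtr hφ, hF]
    simpa using hPtr
  · rw [trace_add, Complex.add_re, trace_smul, trace_vecMulVec, dotProduct_comm, hφ]
    simpa using hQtr

end PureState

section KronPow

variable {d k : ℕ}

def kronVec (ψ : Fin d → ℂ) (k : ℕ) : (Fin k → Fin d) → ℂ :=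
  fun i => ∏ t, ψ (i t)

lemma kronPow_mul (A B : Matrix (Fin d) (Fin d) ℂ) :
    kronPow (A * B) k = kronPow A k * kronPow B k := by
  ext i j
  simp only [kronPow, mul_apply, Finset.prod_univ_sum, Fintype.piFinset_univ,
    Finset.prod_mul_distrib]

lemma kronPow_conjTranspose (A : Matrix (Fin d) (Fin d) ℂ) :
    (kronPow A k)ᴴ = kronPow Aᴴ k := by
  ext i j
  simp [kronPow, conjTranspose_apply]

lemma Matrix.PosSemidef.kronPow {A : Matrix (Fin d) (Fin d) ℂ} (hA : A.PosSemidef) :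
    (kronPow A k).PosSemidef := by
  obtain ⟨B, rfl⟩ := CStarAlgebra.nonneg_iff_eq_star_mul_self.mp hA.nonneg
  rw [star_eq_conjTranspose, kronPow_mul, ← kronPow_conjTranspose]
  exact posSemidef_conjTranspose_mul_self _

lemma trace_kronPow (A : Matrix (Fin d) (Fin d) ℂ) : (kronPow A k).trace = A.trace ^ k := by
  simp only [trace, diag, kronPow, Finset.sum_pow', Fintype.piFinset_univ]

lemma kronPow_vecMulVec (ψ : Fin d → ℂ) :
    kronPow (vecMulVec ψ (star ψ)) k = vecMulVec (kronVec ψ k) (star (kronVec ψ k)) := by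
  ext i j
  simp [kronPow, kronVec, vecMulVec_apply, Finset.prod_mul_distrib]

lemma star_kronVec_dotProduct_kronPow_mulVec (ψ : Fin d → ℂ) (A : Matrix (Fin d) (Fin d) ℂ) :
    star (kronVec ψ k) ⬝ᵥ kronPow A k *ᵥ kronVec ψ k = (star ψ ⬝ᵥ A *ᵥ ψ) ^ k := by
  rw [← trace_vecMulVec_mul, ← kronPow_vecMulVec, ← kronPow_mul, trace_kronPow,
    trace_vecMulVec_mul]

lemma star_kronVec_dotProduct_self {ψ : Fin d → ℂ} (hψ : star ψ ⬝ᵥ ψ = 1) :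
    star (kronVec ψ k) ⬝ᵥ kronVec ψ k = 1 := by
  rw [dotProduct_comm, ← trace_vecMulVec, ← kronPow_vecMulVec, trace_kronPow, trace_vecMulVec,
    dotProduct_comm, hψ, one_pow]

lemma ketbra_eq_vecMulVec (ψ : Fin d → ℂ) : ketbra ψ = vecMulVec ψ (star ψ) := rfl

lemma fid_eq_re_star_dotProduct_mulVec (ψ : Fin d → ℂ) (σ : Matrix (Fin d) (Fin d) ℂ) :
    fid ψ σ = (star ψ ⬝ᵥ σ *ᵥ ψ).re := by
  simp only [fid, dotProduct, mulVec, Finset.mul_sum, Pi.star_apply, RCLike.star_def, mul_assoc]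

lemma fid_nonneg {σ : Matrix (Fin d) (Fin d) ℂ} (hσ : σ.PosSemidef) (ψ : Fin d → ℂ) :
    0 ≤ fid ψ σ := by
  rw [fid_eq_re_star_dotProduct_mulVec]; exact hσ.re_dotProduct_nonneg ψ

lemma fid_le_one {σ : Matrix (Fin d) (Fin d) ℂ} (hσ : σ.PosSemidef) (hσtr : σ.trace = 1)
    {ψ : Fin d → ℂ} (hψ : star ψ ⬝ᵥ ψ = 1) : fid ψ σ ≤ 1 := by
  rw [fid_eq_re_star_dotProduct_mulVec]; exact re_star_dotProduct_mulVec_le_one hσ hσtr hψ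

lemma posSemidefSplit_kronPow_sub_kronPow_ketbra {σ : Matrix (Fin d) (Fin d) ℂ}
    (hσ : σ.PosSemidef) (hσtr : σ.trace = 1) {ψ : Fin d → ℂ} (hψ : star ψ ⬝ᵥ ψ = 1) :
    PosSemidefSplit (kronPow σ k - kronPow (ketbra ψ) k)
      (min 1 (k * (1 - fid ψ σ) + √(k * (1 - fid ψ σ)))) := by
  have hF : star ψ ⬝ᵥ σ *ᵥ ψ = fid ψ σ := by
    rw [fid_eq_re_star_dotProduct_mulVec]; exact hσ.star_dotProduct_mulVec_eq_re ψ
  have hbernoulli : 1 - fid ψ σ ^ k ≤ k * (1 - fid ψ σ) := by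
    nlinarith [one_add_mul_sub_le_pow (show (-1 : ℝ) ≤ fid ψ σ by linarith [fid_nonneg hσ ψ]) k]
  have hσk : (kronPow σ k).trace = 1 := by rw [trace_kronPow, hσtr, one_pow]
  have hpure := posSemidefSplit_sub_vecMulVec hσ.kronPow hσk (star_kronVec_dotProduct_self hψ)
  rw [star_kronVec_dotProduct_kronPow_mulVec, hF, ← Complex.ofReal_pow, Complex.ofReal_re,
    ← kronPow_vecMulVec, ← ketbra_eq_vecMulVec] at hpure
  have htrivial := posSemidefSplit_sub_of_trace_eq_one hσ.kronPow hσk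
    (ketbra_eq_vecMulVec ψ ▸ (posSemidef_vecMulVec_self_star ψ).kronPow)
    (by rw [trace_kronPow, ketbra_eq_vecMulVec, trace_vecMulVec, dotProduct_comm, hψ, one_pow])
  refine (htrivial.min hpure).mono (min_le_min le_rfl ?_)
  gcongr

end KronPow

lemma star_dotProduct_self_eq_one {d : ℕ} {ψ : Fin d → ℂ} (hψ : ∑ i, ‖ψ i‖ ^ 2 = 1) :
    star ψ ⬝ᵥ ψ = 1 := by
  simp only [dotProduct, Pi.star_apply, RCLike.star_def, ← Complex.normSq_eq_conj_mul_self,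
    Complex.normSq_eq_norm_sq]
  exact_mod_cast hψ

lemma min_one_add_sqrt_le {x a : ℝ} (hx : 0 ≤ x) (ha : 0 < a) : min 1 (x + √x) ≤ x / a + √a := by
  have hxa : 0 ≤ x / a := by positivity
  rcases le_or_gt 1 a with h1 | h1
  · have : 1 ≤ √a := Real.one_le_sqrt.mpr h1
    linarith [min_le_left 1 (x + √x)]
  rcases le_or_gt a x with h2 | h2
  · have : 1 ≤ x / a := (one_le_div ha).mpr h2
    linarith [min_le_left 1 (x + √x), Real.sqrt_nonneg a]
  · have : x ≤ x / a := le_div_self hx ha h1.le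
    have : √x ≤ √a := Real.sqrt_le_sqrt h2.le
    linarith [min_le_right 1 (x + √x)]

lemma sum_mul_min_one_add_sqrt_le {ι : Type*} [Fintype ι] {p g : ι → ℝ} {k a δ : ℝ}
    (hp0 : ∀ z, 0 ≤ p z) (hp1 : ∑ z, p z = 1) (hg : ∀ z, 0 ≤ g z) (hδ : ∑ z, p z * g z ≤ δ)
    (hk : 1 ≤ k) (ha : 0 < a) :
    ∑ z, p z * min 1 (k * g z + √(k * g z)) ≤ k * δ / a + k * √a := calc
  ∑ z, p z * min 1 (k * g z + √(k * g z)) ≤ ∑ z, p z * (k * g z / a + √a) :=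
      Finset.sum_le_sum fun z _ => mul_le_mul_of_nonneg_left
        (min_one_add_sqrt_le (mul_nonneg (by linarith) (hg z)) ha) (hp0 z)
  _ = k / a * ∑ z, p z * g z + √a := by
      simp only [mul_add, Finset.sum_add_distrib, ← Finset.sum_mul, hp1, one_mul, Finset.mul_sum]
      congr 1
      exact Finset.sum_congr rfl fun z _ => by ring
  _ ≤ k * δ / a + k * √a := by
      have : k / a * ∑ z, p z * g z ≤ k / a * δ :=
        mul_le_mul_of_nonneg_left hδ (div_nonneg (by linarith) ha.le)
      have : √a ≤ k * √a := le_mul_of_one_le_left (Real.sqrt_nonneg a) hk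
      rw [mul_div_right_comm]
      linarith

/-- Theorem 2 of the paper (no-cloning from statistically private classical
quantum randomised encoding), instantiated at the points where the quantum
operations are used. -/
theorem no_cloning_statistical {d m : ℕ} (ψ : Fin d → ℂ)
    (hψ : ∑ i, ‖ψ i‖ ^ 2 = 1)
    (k : ℕ) (hk : 1 ≤ k) (a : ℝ) (ha : 0 < a) (δ ε : ℝ)
    (p : Fin m → ℝ) (hp0 : ∀ z, 0 ≤ p z) (hp1 : ∑ z, p z = 1)
    (σ : Fin m → Matrix (Fin d) (Fin d) ℂ)
    (hσ : ∀ z, (σ z).PosSemidef) (hσtr : ∀ z, (σ z).trace = 1)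
    (hδ : ∑ z, p z * (1 - fid ψ (σ z)) ≤ δ)
    (τ : Matrix (Fin m) (Fin m) ℂ) (hτ : τ.PosSemidef) (hτtr : τ.trace = 1)
    (hε : (1 / 2 : ℝ) * traceNorm (τ - Matrix.diagonal (fun z => (p z : ℂ))) ≤ ε) :
    (1 / 2 : ℝ) * traceNorm
        (∑ z, (((τ z z).re : ℝ) : ℂ) • kronPow (σ z) k - kronPow (ketbra ψ) k)
      ≤ ε + (k : ℝ) * δ / a + (k : ℝ) * Real.sqrt a := by
  have hψ' := star_dotProduct_self_eq_one hψ
  set q : Fin m → ℝ := fun z => (τ z z).re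
  set b : Fin m → ℝ := fun z => min 1 (k * (1 - fid ψ (σ z)) + √(k * (1 - fid ψ (σ z))))
  have hg : ∀ z, 0 ≤ 1 - fid ψ (σ z) := fun z => sub_nonneg.mpr (fid_le_one (hσ z) (hσtr z) hψ')
  have hb0 : ∀ z, 0 ≤ b z := fun z =>
    le_min zero_le_one (add_nonneg (mul_nonneg k.cast_nonneg (hg z)) (Real.sqrt_nonneg _))
  have hX : ∑ z, (q z : ℂ) • kronPow (σ z) k - kronPow (ketbra ψ) k =
      ∑ z, (q z : ℂ) • (kronPow (σ z) k - kronPow (ketbra ψ) k) := by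
    simp only [smul_sub, Finset.sum_sub_distrib, ← Finset.sum_smul, q, hτ.sum_ofReal_re_diag,
      hτtr, one_smul]
  have hsplit := PosSemidefSplit.sum_smul
    (fun z => posSemidefSplit_kronPow_sub_kronPow_ketbra (k := k) (hσ z) (hσtr z) hψ')
    (fun z => (Complex.nonneg_iff.mp (hτ.diag_nonneg (i := z))).1)
  calc (1 / 2 : ℝ) * traceNorm (∑ z, (q z : ℂ) • kronPow (σ z) k - kronPow (ketbra ψ) k)
      ≤ ∑ z, q z * b z := by rw [hX]; linarith [hsplit.traceNorm_le]
    _ ≤ ∑ z, p z * b z + ε := by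
      linarith [sum_re_diag_mul_le_add_traceNorm hτ.1 hτtr hp1 hb0 fun z => min_le_left _ _]
    _ ≤ ε + k * δ / a + k * √a := by
      linarith [sum_mul_min_one_add_sqrt_le hp0 hp1 hg hδ (by exact_mod_cast hk : (1 : ℝ) ≤ k) ha]
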